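/- Let G = (V, E) be a simple graph with Δ(G) ≤ 8, let π be a partial 8-edge-coloring of G, and let E_T ⊆ E be a set of uncolored butterfly-like edges, all of the same type T ∈ {0, 1_{ab}, 3_{ab}, 4_{ab}, 5_{ab}, 6_{abcd}} for some distinct colors a, b, c, d ∈ {1,…,8}, which are pairwise 4-independent and pairwise T-chain independent. Then there exists a partial 8-edge-coloring σ of G whose set of colored edges is π's colored set together with all edges of E_T. -/

import Mathlib

open SimpleGraph

open scoped Classical in
/-- `π` is a proper partial `D`-edge-coloring of `G`: it assigns `none` outside the edge set,
and distinct incident edges receive different colors. -/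
def IsProperPEC {V : Type} (G : SimpleGraph V) (D : ℕ) (π : Sym2 V → Option (Fin D)) : Prop :=
  (∀ e, π e ≠ none → e ∈ G.edgeSet) ∧
    ∀ e₁ e₂ : Sym2 V, e₁ ≠ e₂ → (∃ v, v ∈ e₁ ∧ v ∈ e₂) → π e₁ ≠ none → π e₁ ≠ π e₂

/-- Number of neighbors of `x` having degree `8`. -/
def deg8Nbrs {V : Type} [Fintype V] [DecidableEq V] (G : SimpleGraph V) [DecidableRel G.Adj]
    (x : V) : ℕ :=
  ((G.neighborFinset x).filter (fun w => G.degree w = 8)).card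

/-- The edge `xy` is `x`-weak. -/
def IsXWeak {V : Type} [Fintype V] [DecidableEq V] (G : SimpleGraph V) [DecidableRel G.Adj]
    (x y : V) : Prop :=
  deg8Nbrs G x ≤ 8 - G.degree y + (if G.degree y = 8 then 1 else 0)

/-- The edge `e` is weak: `e = xy` with `xy` `x`-weak or `y`-weak. -/
def IsWeakEdge {V : Type} [Fintype V] [DecidableEq V] (G : SimpleGraph V) [DecidableRel G.Adj]
    (e : Sym2 V) : Prop :=
  ∃ x y : V, e = s(x, y) ∧ G.Adj x y ∧ (IsXWeak G x y ∨ IsXWeak G y x)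

/-- A butterfly of the first kind with the given vertices. -/
def IsButterflyB1 {V : Type} [Fintype V] [DecidableEq V] (G : SimpleGraph V) [DecidableRel G.Adj]
    (x y z v₁ v₂ v₃ : V) : Prop :=
  List.Pairwise (· ≠ ·) [x, y, z, v₁, v₂, v₃] ∧
  G.Adj x y ∧ G.Adj x z ∧ G.Adj y v₁ ∧ G.Adj y v₃ ∧ G.Adj z v₁ ∧ G.Adj z v₂ ∧
  G.Adj x v₁ ∧ G.Adj x v₂ ∧ G.Adj x v₃ ∧
  G.degree y = 3 ∧ G.degree z = 3 ∧ G.degree x = 8 ∧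
  G.degree v₁ = 8 ∧ G.degree v₂ = 8 ∧ G.degree v₃ = 8

/-- A butterfly of the second kind with the given vertices. -/
def IsButterflyB2 {V : Type} [Fintype V] [DecidableEq V] (G : SimpleGraph V) [DecidableRel G.Adj]
    (x y z v₁ v₂ v₃ v₄ : V) : Prop :=
  List.Pairwise (· ≠ ·) [x, y, z, v₁, v₂, v₃, v₄] ∧
  G.Adj x y ∧ G.Adj x z ∧ G.Adj y v₁ ∧ G.Adj y v₄ ∧ G.Adj z v₂ ∧ G.Adj z v₃ ∧
  G.Adj x v₁ ∧ G.Adj x v₂ ∧ G.Adj x v₃ ∧ G.Adj x v₄ ∧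
  G.degree y = 3 ∧ G.degree z = 3 ∧ G.degree x = 8 ∧
  G.degree v₁ = 8 ∧ G.degree v₂ = 8 ∧ G.degree v₃ = 8 ∧ G.degree v₄ = 8

/-- The pair `(x, y)` is the distinguished edge `xy` of some butterfly of `G`. -/
def IsButterflyLikeAt {V : Type} [Fintype V] [DecidableEq V] (G : SimpleGraph V)
    [DecidableRel G.Adj] (x y : V) : Prop :=
  (∃ z v₁ v₂ v₃, IsButterflyB1 G x y z v₁ v₂ v₃) ∨
  (∃ z v₁ v₂ v₃ v₄, IsButterflyB2 G x y z v₁ v₂ v₃ v₄)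

/-- The edge `e` is butterfly-like. -/
def IsButterflyLike {V : Type} [Fintype V] [DecidableEq V] (G : SimpleGraph V)
    [DecidableRel G.Adj] (e : Sym2 V) : Prop :=
  ∃ x y : V, e = s(x, y) ∧ IsButterflyLikeAt G x y

/-- An edge is reducible when it is weak or butterfly-like. -/
def IsReducible {V : Type} [Fintype V] [DecidableEq V] (G : SimpleGraph V) [DecidableRel G.Adj]
    (e : Sym2 V) : Prop :=
  IsWeakEdge G e ∨ IsButterflyLike G e

/-- Reversal of darts, as a permutation. -/
def dartRev {V : Type} (G : SimpleGraph V) : Equiv.Perm G.Dart :=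
  ⟨SimpleGraph.Dart.symm, SimpleGraph.Dart.symm,
    fun d => SimpleGraph.Dart.symm_symm d, fun d => SimpleGraph.Dart.symm_symm d⟩

/-- `ρ` is a rotation system of `G`: it permutes the darts around each vertex
in a single cycle. -/
def IsRotationSystem {V : Type} (G : SimpleGraph V) (ρ : Equiv.Perm G.Dart) : Prop :=
  (∀ d : G.Dart, (ρ d).fst = d.fst) ∧
    ∀ d d' : G.Dart, d.fst = d'.fst → ρ.SameCycle d d'

/-- The face permutation of a rotation system. -/
def facePerm {V : Type} (G : SimpleGraph V) (ρ : Equiv.Perm G.Dart) : Equiv.Perm G.Dart :=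
  (dartRev G).trans ρ

/-- The setoid of darts whose classes are the faces of a combinatorial embedding. -/
def faceSetoid {V : Type} (G : SimpleGraph V) (ρ : Equiv.Perm G.Dart) : Setoid G.Dart :=
  ⟨(facePerm G ρ).SameCycle, Equiv.Perm.SameCycle.equivalence _⟩

/-- The number of faces of a combinatorial embedding. -/
noncomputable def numFaces {V : Type} (G : SimpleGraph V) (ρ : Equiv.Perm G.Dart) : ℕ :=
  Nat.card (Quotient (faceSetoid G ρ))

/-- The number of isolated vertices of `G`. -/
noncomputable def numIsolated {V : Type} (G : SimpleGraph V) : ℕ :=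
  Nat.card {v : V // ∀ w, ¬ G.Adj v w}

/-- The number of connected components of `G`. -/
noncomputable def numComponents {V : Type} (G : SimpleGraph V) : ℕ :=
  Nat.card G.ConnectedComponent

/-- `G` is embeddable in an orientable surface of genus at most `g`: it has a combinatorial
embedding (rotation system) whose Euler characteristic, summed over components, is at least
`2 * (number of components) - 2 * g`. -/
def GenusLE {V : Type} (G : SimpleGraph V) (g : ℕ) : Prop :=
  ∃ ρ : Equiv.Perm G.Dart, IsRotationSystem G ρ ∧
    2 * (numComponents G : ℤ) - 2 * (g : ℤ) ≤
      (Nat.card V : ℤ) - (Nat.card G.edgeSet : ℤ) + ((numFaces G ρ + numIsolated G : ℕ) : ℤ)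

/-- `G` is planar: it is embeddable in an orientable surface of genus `0`, i.e. the sphere. -/
def IsPlanar {V : Type} (G : SimpleGraph V) : Prop := GenusLE G 0

/-- Color `c` is free at `v` (no colored edge incident to `v` has color `c`). -/
def freeAt {V : Type} {D : ℕ} (π : Sym2 V → Option (Fin D)) (v : V) (c : Fin D) : Prop :=
  ∀ e : Sym2 V, v ∈ e → π e ≠ some c

/-- The graph formed by the edges colored `a` or `b`; its components are the `(a,b)`-chains. -/
def chainGraph {V : Type} {D : ℕ} (π : Sym2 V → Option (Fin D)) (a b : Fin D) : SimpleGraph V :=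
  SimpleGraph.fromEdgeSet {e | π e = some a ∨ π e = some b}

/-- `u` and `v` lie on the same `(a,b)`-chain. -/
def chainReach {V : Type} {D : ℕ} (π : Sym2 V → Option (Fin D)) (a b : Fin D) (u v : V) : Prop :=
  (chainGraph π a b).Reachable u v

/-- `v` is an endpoint of its `(a,b)`-chain (it has at most one neighbor on the chain). -/
def chainEndpoint {V : Type} {D : ℕ} (π : Sym2 V → Option (Fin D)) (a b : Fin D) (v : V) : Prop :=
  ((chainGraph π a b).neighborSet v).Subsingleton

/-- There is an `(a,b)`-chain with endpoints `u` and `v`. -/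
def chainPathEndpoints {V : Type} {D : ℕ} (π : Sym2 V → Option (Fin D)) (a b : Fin D)
    (u v : V) : Prop :=
  u ≠ v ∧ chainReach π a b u v ∧ chainEndpoint π a b u ∧ chainEndpoint π a b v

/-- The `(a,b)`-chain containing `x` is a cycle (no vertex of it is an endpoint). -/
def inChainCycle {V : Type} {D : ℕ} (π : Sym2 V → Option (Fin D)) (a b : Fin D) (x : V) : Prop :=
  ∀ v, chainReach π a b x v → ¬ chainEndpoint π a b v

/-- The vertex `w` is at distance at most `k` from the edge `e`. -/
def vtxEdgeDistLE {V : Type} (G : SimpleGraph V) (k : ℕ) (w : V) (e : Sym2 V) : Prop :=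
  ∃ u, u ∈ e ∧ ∃ p : G.Walk w u, p.length ≤ k

/-- The edges `e₁` and `e₂` are at distance at most `k` from each other. -/
def edgeDistLE {V : Type} (G : SimpleGraph V) (k : ℕ) (e₁ e₂ : Sym2 V) : Prop :=
  ∃ u, u ∈ e₁ ∧ vtxEdgeDistLE G k u e₂

/-- The uncolored edge `xy` has type 0: `π` can be turned into a coloring additionally coloring
`xy` by recoloring only edges at distance at most 1 from `xy`. -/
def HasType0 {V : Type} (G : SimpleGraph V) (π : Sym2 V → Option (Fin 8)) (x y : V) : Prop :=
  ∃ σ : Sym2 V → Option (Fin 8), IsProperPEC G 8 σ ∧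
    (∀ e, σ e ≠ none ↔ (π e ≠ none ∨ e = s(x, y))) ∧
    (∀ e, ¬ edgeDistLE G 1 e s(x, y) → σ e = π e)

/-- The uncolored edge `xy` has type `1_{ab}`. -/
def HasType1 {V : Type} (π : Sym2 V → Option (Fin 8)) (x y : V) (a b : Fin 8) : Prop :=
  freeAt π x a ∧ freeAt π y b ∧ ¬ (chainReach π a b x y ∧ chainEndpoint π a b x)

/-- The uncolored edge `xy` has type `2_{ab}`. -/
def HasType2 {V : Type} (G : SimpleGraph V) (π : Sym2 V → Option (Fin 8)) (x y : V)
    (a b : Fin 8) : Prop :=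
  freeAt π y a ∧ freeAt π y b ∧
  ∃ c : Fin 8, c ≠ b ∧ freeAt π x c ∧
    ∃ z : V, G.Adj x z ∧ G.Adj y z ∧ π s(y, z) = some c ∧ π s(x, z) = some a ∧
      ¬ inChainCycle π a b x

/-- The uncolored edge `xy` has type `3_{ab}`. -/
def HasType3 {V : Type} (G : SimpleGraph V) (π : Sym2 V → Option (Fin 8)) (x y : V)
    (a b : Fin 8) : Prop :=
  freeAt π x a ∧ freeAt π y b ∧ chainPathEndpoints π a b x y ∧
  ∃ c : Fin 8, c ≠ b ∧ freeAt π y c ∧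
    ∃ z : V, G.Adj x z ∧ freeAt π z b ∧ π s(x, z) = some c

/-- The uncolored edge `xy` has type `4_{ab}`. -/
def HasType4 {V : Type} (G : SimpleGraph V) (π : Sym2 V → Option (Fin 8)) (x y : V)
    (a b : Fin 8) : Prop :=
  freeAt π y a ∧ freeAt π y b ∧ inChainCycle π a b x ∧
  ∃ c : Fin 8, freeAt π x c ∧
    ∃ z v : V, z ≠ v ∧ z ≠ x ∧ z ≠ y ∧ v ≠ x ∧ v ≠ y ∧
      G.Adj x v ∧ G.Adj z v ∧ π s(x, v) = some a ∧ π s(z, v) = some c ∧ freeAt π z b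

/-- The uncolored edge `xy` has type `5_{ab}`. -/
def HasType5 {V : Type} (G : SimpleGraph V) (π : Sym2 V → Option (Fin 8)) (x y : V)
    (a b : Fin 8) : Prop :=
  freeAt π y a ∧ freeAt π x b ∧ chainPathEndpoints π a b x y ∧
  ∃ c : Fin 8, c ≠ a ∧ freeAt π y c ∧
    ∃ z v : V, z ≠ v ∧ z ≠ x ∧ z ≠ y ∧ v ≠ x ∧ v ≠ y ∧
      G.Adj x v ∧ G.Adj z v ∧ π s(x, v) = some c ∧ π s(z, v) = some a ∧
      freeAt π z b ∧ freeAt π z c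

/-- The uncolored edge `xy` has type `6_{abcd}`. -/
def HasType6 {V : Type} (G : SimpleGraph V) (π : Sym2 V → Option (Fin 8)) (x y : V)
    (a b c d : Fin 8) : Prop :=
  freeAt π y a ∧ freeAt π y c ∧ freeAt π y d ∧ freeAt π x b ∧
  chainPathEndpoints π a b x y ∧ inChainCycle π c d x ∧
  ∃ z v₁ v₂ : V, z ≠ v₁ ∧ z ≠ v₂ ∧ v₁ ≠ v₂ ∧ z ≠ x ∧ z ≠ y ∧ v₁ ≠ x ∧ v₁ ≠ y ∧ v₂ ≠ x ∧ v₂ ≠ y ∧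
    G.Adj x v₁ ∧ G.Adj x v₂ ∧ G.Adj z v₁ ∧ G.Adj z v₂ ∧
    π s(x, v₁) = some c ∧ π s(x, v₂) = some a ∧ π s(z, v₁) = some a ∧ π s(z, v₂) = some c ∧
    freeAt π z b ∧ freeAt π z d

/-- A tag for the types `0`, `1_{ab}`, `3_{ab}`, `4_{ab}`, `5_{ab}`, `6_{abcd}`. -/
inductive TypeTag | t0 | t1 | t3 | t4 | t5 | t6

/-- The uncolored butterfly-like edge `xy` has the type designated by the tag. -/
def HasTypeTag {V : Type} (G : SimpleGraph V) (π : Sym2 V → Option (Fin 8)) (tag : TypeTag)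
    (a b c d : Fin 8) (x y : V) : Prop :=
  match tag with
  | .t0 => HasType0 G π x y
  | .t1 => HasType1 π x y a b
  | .t3 => HasType3 G π x y a b
  | .t4 => HasType4 G π x y a b
  | .t5 => HasType5 G π x y a b
  | .t6 => HasType6 G π x y a b c d

/-- Edges `e₁` and `e₂` are `(a,b)`-chain independent: there is no `(a,b)`-chain whose two
endpoints are distinct vertices at distance at most 1 from `e₁` and `e₂` respectively. -/
def ChainIndep {V : Type} (G : SimpleGraph V) (π : Sym2 V → Option (Fin 8)) (a b : Fin 8)
    (e₁ e₂ : Sym2 V) : Prop :=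
  ¬ ∃ w₁ w₂ : V, vtxEdgeDistLE G 1 w₁ e₁ ∧ vtxEdgeDistLE G 1 w₂ e₂ ∧
      chainPathEndpoints π a b w₁ w₂

/-- `T`-chain independence for two butterfly-like edges of the same type `T`. -/
def TagChainIndep {V : Type} (G : SimpleGraph V) (π : Sym2 V → Option (Fin 8)) (tag : TypeTag)
    (a b c d : Fin 8) (e₁ e₂ : Sym2 V) : Prop :=
  match tag with
  | .t0 => True
  | .t6 => ChainIndep G π a b e₁ e₂ ∧ ChainIndep G π c d e₁ e₂
  | _ => ChainIndep G π a b e₁ e₂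

/-!
The sites are at pairwise distance more than `4`, so the balls of radius `2` around them are
disjoint, and proper recolorings confined to these balls can be carried out together. For each
type, a single Kempe change on a union of `(a,b)`-chains prepares all sites at once (none is needed
for type `0`); then each site edge is colored by a move inside its ball: directly (types `1` and
`6`), after recoloring `xz` and taking over its old color (type `3`), or after exchanging the colors
of `xv` and `zv` (types `4` and `5`). The swapped chains do not disturb the other sites: by chain
independence for type `1`, because a chain with two known endpoints has no third one for types
`3`, `5` and `6`, and because they are cycles for type `4`. For type `6`, exchanging `a` and `c`
around the square `x v₁ z v₂` first makes the `(a,b)`-path from `y` end at `z` instead of `x`.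
-/

namespace SimpleGraph

variable {V : Type} {H : SimpleGraph V}

lemma Walk.IsPath.not_subsingleton_neighborSet_getVert {u v : V} {p : H.Walk u v}
    (hp : p.IsPath) {i : ℕ} (h0 : 0 < i) (hi : i < p.length) :
    ¬ (H.neighborSet (p.getVert i)).Subsingleton := by
  intro hsub
  have hprev : H.Adj (p.getVert i) (p.getVert (i - 1)) := by
    simpa [Nat.sub_add_cancel h0] using (p.adj_getVert_succ (i := i - 1) (by omega)).symm
  have hnext : H.Adj (p.getVert i) (p.getVert (i + 1)) := p.adj_getVert_succ hi
  have := hp.getVert_injOn (by simp; omega) (by simp; omega) (hsub hprev hnext)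
  omega

lemma Walk.IsPath.getVert_eq_getVert
    (hdeg : ∀ v w₁ w₂ w₃, H.Adj v w₁ → H.Adj v w₂ → H.Adj v w₃ → w₁ = w₂ ∨ w₁ = w₃ ∨ w₂ = w₃)
    {u v w : V} (hu : (H.neighborSet u).Subsingleton) {p : H.Walk u v} {q : H.Walk u w}
    (hp : p.IsPath) (hq : q.IsPath) :
    ∀ i, i ≤ p.length → i ≤ q.length → p.getVert i = q.getVert i
  | 0, _, _ => by simp
  | 1, hip, hiq => hu (by simpa using p.adj_getVert_succ (i := 0) (by omega))
      (by simpa using q.adj_getVert_succ (i := 0) (by omega))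
  | j + 2, hip, hiq => by
    have hj := getVert_eq_getVert hdeg hu hp hq j (by omega) (by omega)
    have hj1 := getVert_eq_getVert hdeg hu hp hq (j + 1) (by omega) (by omega)
    have hp1 := (p.adj_getVert_succ (i := j) (by omega)).symm
    have hp2 := p.adj_getVert_succ (i := j + 1) (by omega)
    have hq2 := q.adj_getVert_succ (i := j + 1) (by omega)
    rw [hj1] at hp1 hp2
    rw [hj] at hp1
    rcases hdeg _ _ _ _ hp1 hp2 hq2 with h | h | h
    · have := hp.getVert_injOn (by simp; omega) (by simp; omega) (hj.trans h)
      omega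
    · have := hq.getVert_injOn (by simp; omega) (by simp; omega) h
      omega
    · exact h

lemma eq_or_eq_of_reachable_of_neighborSet_subsingleton
    (hdeg : ∀ v w₁ w₂ w₃, H.Adj v w₁ → H.Adj v w₂ → H.Adj v w₃ → w₁ = w₂ ∨ w₁ = w₃ ∨ w₂ = w₃)
    {u v w : V} (hu : (H.neighborSet u).Subsingleton) (hv : (H.neighborSet v).Subsingleton)
    (hw : (H.neighborSet w).Subsingleton) (huv : u ≠ v) (hrv : H.Reachable u v)
    (hrw : H.Reachable u w) : w = u ∨ w = v := by
  by_contra! hne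
  obtain ⟨p, hp⟩ := hrv.exists_isPath
  obtain ⟨q, hq⟩ := hrw.exists_isPath
  have hagree := Walk.IsPath.getVert_eq_getVert hdeg hu hp hq
  have hp0 : 0 < p.length := Walk.not_nil_iff_lt_length.mp (Walk.not_nil_of_ne huv)
  have hq0 : 0 < q.length := Walk.not_nil_iff_lt_length.mp (Walk.not_nil_of_ne (Ne.symm hne.1))
  rcases lt_trichotomy p.length q.length with h | h | h
  · have hv' := hagree p.length le_rfl h.le
    rw [Walk.getVert_length] at hv'
    exact hq.not_subsingleton_neighborSet_getVert hp0 h (hv' ▸ hv)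
  · have := hagree p.length le_rfl h.le
    rw [Walk.getVert_length, h, Walk.getVert_length] at this
    exact hne.2 this.symm
  · have hw' := hagree q.length h.le le_rfl
    rw [Walk.getVert_length] at hw'
    exact hp.not_subsingleton_neighborSet_getVert hq0 h (hw'.symm ▸ hw)

lemma exists_walk_not_mem_support {x v y : V} (hx : (H.neighborSet x).Subsingleton)
    (hxv : H.Adj x v) (hxy : H.Reachable x y) (hne : x ≠ y) :
    ∃ W : H.Walk v y, x ∉ W.support := by
  obtain ⟨p, hp⟩ := hxy.exists_isPath
  cases p with
  | nil => exact absurd rfl hne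
  | cons h q =>
    obtain rfl := hx h hxv
    exact ⟨q, ((Walk.cons_isPath_iff h q).mp hp).2⟩

end SimpleGraph

section Chains

variable {V : Type} {D : ℕ} {G : SimpleGraph V} {σ : Sym2 V → Option (Fin D)} {a b : Fin D}

lemma IsProperPEC.eq_of_eq_some (hσ : IsProperPEC G D σ) {e₁ e₂ : Sym2 V} {k : Fin D} {v : V}
    (h₁ : σ e₁ = some k) (h₂ : σ e₂ = some k) (hv₁ : v ∈ e₁) (hv₂ : v ∈ e₂) : e₁ = e₂ := by
  by_contra hne
  exact hσ.2 e₁ e₂ hne ⟨v, hv₁, hv₂⟩ (by simp [h₁]) (h₁.trans h₂.symm)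

lemma IsProperPEC.ne_some_of_ne (hσ : IsProperPEC G D σ) {e e' : Sym2 V} {k : Fin D} {v : V}
    (h : σ e = some k) (hv : v ∈ e) (hv' : v ∈ e') (hne : e' ≠ e) : σ e' ≠ some k :=
  fun h' => hne (hσ.eq_of_eq_some h' h hv' hv)

lemma IsProperPEC.eq_of_mk_eq_some (hσ : IsProperPEC G D σ) {k : Fin D} {v w₁ w₂ : V}
    (h₁ : σ s(v, w₁) = some k) (h₂ : σ s(v, w₂) = some k) : w₁ = w₂ :=
  Sym2.congr_right.mp (hσ.eq_of_eq_some h₁ h₂ (Sym2.mem_mk_left _ _) (Sym2.mem_mk_left _ _))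

lemma chainGraph_adj_iff {u w : V} :
    (chainGraph σ a b).Adj u w ↔ (σ s(u, w) = some a ∨ σ s(u, w) = some b) ∧ u ≠ w := by
  rw [chainGraph, SimpleGraph.fromEdgeSet_adj]
  rfl

lemma mem_edgeSet_chainGraph {e : Sym2 V} :
    e ∈ (chainGraph σ a b).edgeSet ↔ (σ e = some a ∨ σ e = some b) ∧ ¬ e.IsDiag := by
  rw [chainGraph, SimpleGraph.edgeSet_fromEdgeSet]
  rfl

lemma chainReach_of_walk {σ' : Sym2 V → Option (Fin D)} {u w : V}
    (W : (chainGraph σ a b).Walk u w) (h : ∀ e ∈ W.edges, σ' e = σ e) :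
    chainReach σ' a b u w := by
  refine ⟨W.transfer _ fun e he => ?_⟩
  rw [mem_edgeSet_chainGraph, h e he, ← mem_edgeSet_chainGraph]
  exact W.edges_subset_edgeSet he

lemma chainGraph_comm : chainGraph σ a b = chainGraph σ b a := by
  simp only [chainGraph, or_comm]

lemma chainEndpoint_of_freeAt_right (hσ : IsProperPEC G D σ) {u : V} (h : freeAt σ u b) :
    chainEndpoint σ a b u := by
  intro w₁ hw₁ w₂ hw₂
  rw [SimpleGraph.mem_neighborSet, chainGraph_adj_iff] at hw₁ hw₂
  have ha : ∀ w, σ s(u, w) = some a ∨ σ s(u, w) = some b → σ s(u, w) = some a :=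
    fun w hw => hw.resolve_right (h _ (Sym2.mem_mk_left u w))
  exact hσ.eq_of_mk_eq_some (ha _ hw₁.1) (ha _ hw₂.1)

lemma chainEndpoint_of_freeAt_left (hσ : IsProperPEC G D σ) {u : V} (h : freeAt σ u a) :
    chainEndpoint σ a b u := by
  rw [chainEndpoint, chainGraph_comm]
  exact chainEndpoint_of_freeAt_right hσ h

lemma IsProperPEC.chainGraph_adj_three (hσ : IsProperPEC G D σ) (v w₁ w₂ w₃ : V)
    (h₁ : (chainGraph σ a b).Adj v w₁) (h₂ : (chainGraph σ a b).Adj v w₂)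
    (h₃ : (chainGraph σ a b).Adj v w₃) : w₁ = w₂ ∨ w₁ = w₃ ∨ w₂ = w₃ := by
  rw [chainGraph_adj_iff] at h₁ h₂ h₃
  rcases h₁.1 with h₁ | h₁ <;> rcases h₂.1 with h₂ | h₂ <;> rcases h₃.1 with h₃ | h₃ <;>
    first
    | exact Or.inl (hσ.eq_of_mk_eq_some h₁ h₂)
    | exact Or.inr (Or.inl (hσ.eq_of_mk_eq_some h₁ h₃))
    | exact Or.inr (Or.inr (hσ.eq_of_mk_eq_some h₂ h₃))

lemma IsProperPEC.eq_or_eq_of_chainGraph_adj (hσ : IsProperPEC G D σ) {u p q w : V}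
    (hp : σ s(u, p) = some a) (hq : σ s(u, q) = some b) (h : (chainGraph σ a b).Adj u w) :
    w = p ∨ w = q := by
  rcases (chainGraph_adj_iff.mp h).1 with h' | h'
  exacts [Or.inl (hσ.eq_of_mk_eq_some h' hp), Or.inr (hσ.eq_of_mk_eq_some h' hq)]

lemma IsProperPEC.eq_or_eq_of_chainEndpoint (hσ : IsProperPEC G D σ) {u v w : V}
    (h : chainPathEndpoints σ a b u v) (hw : chainEndpoint σ a b w) (hr : chainReach σ a b u w) :
    w = u ∨ w = v :=
  SimpleGraph.eq_or_eq_of_reachable_of_neighborSet_subsingleton hσ.chainGraph_adj_three h.2.2.1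
    h.2.2.2 hw h.1 h.2.1 hr

end Chains

section KempeSwap

variable {V : Type} {D : ℕ} {G : SimpleGraph V} {σ : Sym2 V → Option (Fin D)} {a b : Fin D}
  {R : Set V}

open scoped Classical in
noncomputable def kempeSwap (a b : Fin D) (R : Set V) (σ : Sym2 V → Option (Fin D)) :
    Sym2 V → Option (Fin D) :=
  fun e => if ∃ v ∈ e, v ∈ R then (σ e).map (Equiv.swap a b) else σ e

def IsChainClosed (σ : Sym2 V → Option (Fin D)) (a b : Fin D) (R : Set V) : Prop :=
  ∀ u ∈ R, ∀ w, (chainGraph σ a b).Adj u w → w ∈ R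

def chainHull (σ : Sym2 V → Option (Fin D)) (a b : Fin D) (T : Set V) : Set V :=
  {u | ∃ s ∈ T, chainReach σ a b s u}

lemma isChainClosed_chainHull (T : Set V) : IsChainClosed σ a b (chainHull σ a b T) :=
  fun _ ⟨s, hs, hsu⟩ _ huw => ⟨s, hs, hsu.trans huw.reachable⟩

lemma subset_chainHull (T : Set V) : T ⊆ chainHull σ a b T :=
  fun s hs => ⟨s, hs, SimpleGraph.Reachable.refl s⟩

lemma IsChainClosed.iUnion {ι : Type*} {R : ι → Set V} (h : ∀ i, IsChainClosed σ a b (R i)) :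
    IsChainClosed σ a b (⋃ i, R i) := by
  intro u hu w huw
  obtain ⟨i, hi⟩ := Set.mem_iUnion.mp hu
  exact Set.mem_iUnion.mpr ⟨i, h i u hi w huw⟩

lemma not_mem_chainHull_of_inChainCycle {T : Set V} (hT : ∀ s ∈ T, inChainCycle σ a b s)
    {u : V} (hu : chainEndpoint σ a b u) : u ∉ chainHull σ a b T :=
  fun ⟨s, hs, hsu⟩ => hT s hs u hsu hu

lemma kempeSwap_comm : kempeSwap a b R σ = kempeSwap b a R σ := by
  unfold kempeSwap
  rw [Equiv.swap_comm]

lemma kempeSwap_eq_none_iff {e : Sym2 V} : kempeSwap a b R σ e = none ↔ σ e = none := by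
  unfold kempeSwap
  split_ifs <;> simp

lemma kempeSwap_of_mem {e : Sym2 V} {u : V} (hu : u ∈ e) (huR : u ∈ R) :
    kempeSwap a b R σ e = (σ e).map (Equiv.swap a b) :=
  if_pos ⟨u, hu, huR⟩

lemma kempeSwap_of_forall_not_mem {e : Sym2 V} (h : ¬ ∃ v ∈ e, v ∈ R) :
    kempeSwap a b R σ e = σ e :=
  if_neg h

lemma kempeSwap_of_ne {e : Sym2 V} (ha : σ e ≠ some a) (hb : σ e ≠ some b) :
    kempeSwap a b R σ e = σ e := by
  unfold kempeSwap
  split_ifs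
  · cases h : σ e with
    | none => rfl
    | some k =>
      rw [h] at ha hb
      simp [Equiv.swap_apply_of_ne_of_ne (fun h => ha (congrArg _ h))
        (fun h => hb (congrArg _ h))]
  · rfl

lemma kempeSwap_of_not_mem (hR : IsChainClosed σ a b R) {e : Sym2 V} {u : V} (hu : u ∈ e)
    (huR : u ∉ R) : kempeSwap a b R σ e = σ e := by
  by_cases hab : σ e = some a ∨ σ e = some b
  · have hout : ¬ ∃ v ∈ e, v ∈ R := by
      rintro ⟨v, hv, hvR⟩
      have hvu : v ≠ u := fun h => huR (h ▸ hvR)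
      have he : e = s(v, u) := (Sym2.mem_and_mem_iff hvu).mp ⟨hv, hu⟩
      exact huR (hR v hvR u (chainGraph_adj_iff.mpr ⟨he ▸ hab, hvu⟩))
    exact if_neg hout
  · rw [not_or] at hab
    exact kempeSwap_of_ne hab.1 hab.2

lemma IsProperPEC.kempeSwap (hσ : IsProperPEC G D σ) (hR : IsChainClosed σ a b R) :
    IsProperPEC G D (kempeSwap a b R σ) := by
  refine ⟨fun e he => hσ.1 e (mt kempeSwap_eq_none_iff.mpr he), ?_⟩
  rintro e₁ e₂ hne ⟨v, hv₁, hv₂⟩ h₁ heq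
  have h₁' : σ e₁ ≠ none := mt kempeSwap_eq_none_iff.mpr h₁
  refine hσ.2 e₁ e₂ hne ⟨v, hv₁, hv₂⟩ h₁' ?_
  by_cases hvR : v ∈ R
  · rw [kempeSwap_of_mem hv₁ hvR, kempeSwap_of_mem hv₂ hvR] at heq
    exact Option.map_injective (Equiv.injective _) heq
  · rwa [kempeSwap_of_not_mem hR hv₁ hvR, kempeSwap_of_not_mem hR hv₂ hvR] at heq

lemma freeAt_kempeSwap_of_not_mem (hR : IsChainClosed σ a b R) {u : V} (huR : u ∉ R)
    {k : Fin D} (h : freeAt σ u k) : freeAt (kempeSwap a b R σ) u k := fun e hu => by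
  rw [kempeSwap_of_not_mem hR hu huR]
  exact h e hu

lemma kempeSwap_eq_some_iff_of_ne {e : Sym2 V} {k : Fin D} (ha : k ≠ a) (hb : k ≠ b) :
    kempeSwap a b R σ e = some k ↔ σ e = some k := by
  unfold kempeSwap
  split_ifs
  · rw [Option.map_eq_some_iff]
    constructor
    · rintro ⟨j, hj, hjk⟩
      rwa [Equiv.swap_apply_eq_iff.mp hjk, Equiv.swap_apply_of_ne_of_ne ha hb] at hj
    · exact fun hk => ⟨k, hk, Equiv.swap_apply_of_ne_of_ne ha hb⟩
  · rfl

lemma kempeSwap_eq_some_left {e : Sym2 V} {u : V} (hu : u ∈ e) (huR : u ∈ R)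
    (h : σ e = some a) : kempeSwap a b R σ e = some b := by
  simp [kempeSwap_of_mem hu huR, h]

lemma kempeSwap_eq_some_right {e : Sym2 V} {u : V} (hu : u ∈ e) (huR : u ∈ R)
    (h : σ e = some b) : kempeSwap a b R σ e = some a := by
  simp [kempeSwap_of_mem hu huR, h]

lemma freeAt_kempeSwap_of_ne {u : V} {k : Fin D} (ha : k ≠ a) (hb : k ≠ b)
    (h : freeAt σ u k) : freeAt (kempeSwap a b R σ) u k := fun e hu => by
  rw [Ne, kempeSwap_eq_some_iff_of_ne ha hb]
  exact h e hu

lemma freeAt_kempeSwap_of_mem {u : V} (huR : u ∈ R) (h : freeAt σ u a) :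
    freeAt (kempeSwap a b R σ) u b := fun e hu => by
  rw [kempeSwap_of_mem hu huR, Ne, Option.map_eq_some_iff]
  rintro ⟨k, hk, hkb⟩
  rw [Equiv.swap_apply_eq_iff, Equiv.swap_apply_right] at hkb
  exact h e hu (hkb ▸ hk)

lemma freeAt_kempeSwap_of_mem' {u : V} (huR : u ∈ R) (h : freeAt σ u b) :
    freeAt (kempeSwap a b R σ) u a :=
  kempeSwap_comm (a := a) ▸ freeAt_kempeSwap_of_mem huR h

end KempeSwap

section Gluing

open Function

variable {V : Type} {D : ℕ} {G : SimpleGraph V}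

def edgeBall (G : SimpleGraph V) (k : ℕ) (e : Sym2 V) : Set V := {w | vtxEdgeDistLE G k w e}

lemma mem_edgeBall_of_mem {k : ℕ} {e : Sym2 V} {w : V} (hw : w ∈ e) : w ∈ edgeBall G k e :=
  ⟨w, hw, .nil, by simp⟩

lemma left_mem_edgeBall {k : ℕ} {u w : V} : u ∈ edgeBall G k s(u, w) :=
  mem_edgeBall_of_mem (Sym2.mem_mk_left u w)

lemma right_mem_edgeBall {k : ℕ} {u w : V} : w ∈ edgeBall G k s(u, w) :=
  mem_edgeBall_of_mem (Sym2.mem_mk_right u w)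

lemma mem_edgeBall_succ_of_adj {k : ℕ} {e : Sym2 V} {w w' : V} (h : G.Adj w w')
    (hw' : w' ∈ edgeBall G k e) : w ∈ edgeBall G (k + 1) e := by
  obtain ⟨u, hu, p, hp⟩ := hw'
  exact ⟨u, hu, .cons h p, by simpa using hp⟩

lemma mem_edgeBall_succ_of_mem_edgeSet {k : ℕ} {e f : Sym2 V} {w w' : V} (hf : f ∈ G.edgeSet)
    (hw : w ∈ f) (hw' : w' ∈ f) (h : w' ∈ edgeBall G k e) : w ∈ edgeBall G (k + 1) e := by
  by_cases hww' : w = w'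
  · subst hww'
    obtain ⟨u, hu, p, hp⟩ := h
    exact ⟨u, hu, p, by omega⟩
  · rw [(Sym2.mem_and_mem_iff hww').mp ⟨hw, hw'⟩] at hf
    exact mem_edgeBall_succ_of_adj hf h

lemma disjoint_edgeBall {k l : ℕ} {e f : Sym2 V} (h : ¬ edgeDistLE G (k + l) e f) :
    Disjoint (edgeBall G k e) (edgeBall G l f) := by
  rw [Set.disjoint_left]
  rintro w ⟨u, hu, p, hp⟩ ⟨u', hu', q, hq⟩
  exact h ⟨u, hu, u', hu', p.reverse.append q, by simp; omega⟩

def IsProperExtension (G : SimpleGraph V) (σ τ : Sym2 V → Option (Fin D)) (F : Set (Sym2 V)) :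
    Prop :=
  IsProperPEC G D τ ∧ ∀ e, τ e ≠ none ↔ σ e ≠ none ∨ e ∈ F

def IsLocalExtension (G : SimpleGraph V) (N : Set V) (e : Sym2 V)
    (σ τ : Sym2 V → Option (Fin D)) : Prop :=
  IsProperExtension G σ τ {e} ∧ ∀ e', τ e' ≠ σ e' → ∀ v ∈ e', v ∈ N

lemma IsProperExtension.of_eq_none_iff {σ σ' τ : Sym2 V → Option (Fin D)} {F : Set (Sym2 V)}
    (h : IsProperExtension G σ' τ F) (hσ : ∀ e, σ' e = none ↔ σ e = none) :
    IsProperExtension G σ τ F :=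
  ⟨h.1, fun e => (h.2 e).trans (by rw [Ne, Ne, hσ])⟩

open scoped Classical in
noncomputable def patch {ι : Type*} (σ : Sym2 V → Option (Fin D))
    (τ : ι → Sym2 V → Option (Fin D)) : Sym2 V → Option (Fin D) :=
  fun e => if h : ∃ i, τ i e ≠ σ e then τ h.choose e else σ e

variable {ι : Type*} {σ : Sym2 V → Option (Fin D)} {τ : ι → Sym2 V → Option (Fin D)}
  {N : ι → Set V}

lemma patch_eq_of_mem (hloc : ∀ i e, τ i e ≠ σ e → ∀ v ∈ e, v ∈ N i)
    (hN : Pairwise (Disjoint on N)) {e : Sym2 V} {v : V} {i : ι} (hv : v ∈ e) (hvi : v ∈ N i) :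
    patch σ τ e = τ i e := by
  unfold patch
  split_ifs with h
  · have hj : h.choose = i := by
      by_contra hne
      exact Set.disjoint_left.mp (hN hne) (hloc _ e h.choose_spec v hv) hvi
    rw [hj]
  · push Not at h
    exact (h i).symm

lemma patch_eq_self {e : Sym2 V} (h : ∀ i, τ i e = σ e) : patch σ τ e = σ e :=
  dif_neg (not_exists.mpr fun i hi => hi (h i))

lemma isProperPEC_patch (hσ : IsProperPEC G D σ) (hτ : ∀ i, IsProperPEC G D (τ i))
    (hloc : ∀ i e, τ i e ≠ σ e → ∀ v ∈ e, v ∈ N i) (hN : Pairwise (Disjoint on N)) :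
    IsProperPEC G D (patch σ τ) := by
  refine ⟨fun e he => ?_, ?_⟩
  · unfold patch at he
    split_ifs at he
    exacts [(hτ _).1 e he, hσ.1 e he]
  rintro e₁ e₂ hne ⟨v, hv₁, hv₂⟩ h₁ heq
  by_cases hv : ∃ i, v ∈ N i
  · obtain ⟨i, hi⟩ := hv
    rw [patch_eq_of_mem hloc hN hv₁ hi] at h₁ heq
    rw [patch_eq_of_mem hloc hN hv₂ hi] at heq
    exact (hτ i).2 e₁ e₂ hne ⟨v, hv₁, hv₂⟩ h₁ heq
  · have hfix : ∀ e, v ∈ e → ∀ i, τ i e = σ e :=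
      fun e he i => by_contra fun h => hv ⟨i, hloc i e h v he⟩
    rw [patch_eq_self (hfix e₁ hv₁)] at h₁ heq
    rw [patch_eq_self (hfix e₂ hv₂)] at heq
    exact hσ.2 e₁ e₂ hne ⟨v, hv₁, hv₂⟩ h₁ heq

theorem exists_isProperExtension_of_isLocalExtension (hσ : IsProperPEC G D σ)
    (hN : Pairwise (Disjoint on N)) (ε : ι → Sym2 V)
    (h : ∀ i, ∃ τ, IsLocalExtension G (N i) (ε i) σ τ) :
    ∃ τ, IsProperExtension G σ τ (Set.range ε) := by
  choose τ hτ using h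
  have hloc : ∀ i e, τ i e ≠ σ e → ∀ v ∈ e, v ∈ N i := fun i => (hτ i).2
  have hsupp : ∀ i e, τ i e ≠ none ↔ σ e ≠ none ∨ e = ε i := fun i => (hτ i).1.2
  refine ⟨patch σ τ, isProperPEC_patch hσ (fun i => (hτ i).1.1) hloc hN, fun e => ?_⟩
  by_cases hdiff : ∃ i, τ i e ≠ σ e
  · obtain ⟨i, hi⟩ := hdiff
    rw [patch_eq_of_mem hloc hN (Sym2.out_fst_mem e) (hloc i e hi _ (Sym2.out_fst_mem e)),
      hsupp, Set.mem_range]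
    refine ⟨Or.imp_right fun he => ⟨i, he.symm⟩, ?_⟩
    rintro (hσe | ⟨j, rfl⟩)
    · exact Or.inl hσe
    by_cases hσe : σ (ε j) = none
    · have hj' : τ j (ε j) ≠ σ (ε j) := by rw [hσe]; exact (hsupp j _).mpr (Or.inr rfl)
      have hij : i = j := by
        by_contra hij
        exact Set.disjoint_left.mp (hN hij) (hloc i _ hi _ (Sym2.out_fst_mem _))
          (hloc j _ hj' _ (Sym2.out_fst_mem _))
      exact Or.inr (hij ▸ rfl)
    · exact Or.inl hσe
  · push Not at hdiff
    rw [patch_eq_self hdiff]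
    refine ⟨Or.inl, ?_⟩
    rintro (h | ⟨j, rfl⟩)
    · exact h
    · exact hdiff j ▸ (hsupp j _).mpr (Or.inr rfl)

end Gluing

section LocalMoves

variable {V : Type} {D : ℕ} {G : SimpleGraph V} {σ : Sym2 V → Option (Fin D)} {N : Set V}
  {x y z v : V}

lemma IsProperPEC.update_none [DecidableEq V] (hσ : IsProperPEC G D σ) (e : Sym2 V) :
    IsProperPEC G D (Function.update σ e none) := by
  refine ⟨fun e' he' => hσ.1 e' ?_, fun e₁ e₂ hne hv h₁ heq => ?_⟩
  · have h : e' ≠ e := by rintro rfl; simp at he'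
    rwa [Function.update_of_ne h] at he'
  · have he₁ : e₁ ≠ e := by rintro rfl; simp at h₁
    have he₂ : e₂ ≠ e := by rintro rfl; exact h₁ (heq.trans (Function.update_self ..))
    rw [Function.update_of_ne he₁] at h₁ heq
    rw [Function.update_of_ne he₂] at heq
    exact hσ.2 e₁ e₂ hne hv h₁ heq

lemma IsProperPEC.update_some [DecidableEq V] (hσ : IsProperPEC G D σ) (hxy : G.Adj x y)
    {k : Fin D} (hx : ∀ e, x ∈ e → e ≠ s(x, y) → σ e ≠ some k)
    (hy : ∀ e, y ∈ e → e ≠ s(x, y) → σ e ≠ some k) :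
    IsProperPEC G D (Function.update σ s(x, y) (some k)) := by
  have hfree : ∀ e u, u ∈ s(x, y) → u ∈ e → e ≠ s(x, y) → σ e ≠ some k := by
    intro e u hu
    rcases Sym2.mem_iff.mp hu with rfl | rfl
    exacts [hx e, hy e]
  refine ⟨fun e he => ?_, fun e₁ e₂ hne ⟨u, hu₁, hu₂⟩ h₁ heq => ?_⟩
  · by_cases h : e = s(x, y)
    · exact h ▸ hxy
    · exact hσ.1 e (by rwa [Function.update_of_ne h] at he)
  by_cases h₁' : e₁ = s(x, y)
  · subst h₁'
    rw [Function.update_self, Function.update_of_ne (Ne.symm hne)] at heq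
    exact hfree e₂ u hu₁ hu₂ (Ne.symm hne) heq.symm
  by_cases h₂' : e₂ = s(x, y)
  · subst h₂'
    rw [Function.update_self, Function.update_of_ne hne] at heq
    exact hfree e₁ u hu₂ hu₁ hne heq
  rw [Function.update_of_ne h₁'] at h₁ heq
  rw [Function.update_of_ne h₂'] at heq
  exact hσ.2 e₁ e₂ hne ⟨u, hu₁, hu₂⟩ h₁ heq

lemma forall_mem_mk_mem {x y : V} (hx : x ∈ N) (hy : y ∈ N) : ∀ u ∈ s(x, y), u ∈ N := by
  intro u hu
  rcases Sym2.mem_iff.mp hu with rfl | rfl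
  exacts [hx, hy]

lemma exists_isLocalExtension_color (hσ : IsProperPEC G D σ) (hxy : G.Adj x y) {k : Fin D}
    (hx : freeAt σ x k) (hy : freeAt σ y k) (hxN : x ∈ N) (hyN : y ∈ N) :
    ∃ τ, IsLocalExtension G N s(x, y) σ τ := by
  classical
  refine ⟨Function.update σ s(x, y) (some k), ⟨hσ.update_some hxy (fun e he _ => hx e he)
    (fun e he _ => hy e he), fun e => ?_⟩, fun e he => ?_⟩
  · by_cases h : e = s(x, y) <;> simp [h]
  · by_cases h : e = s(x, y)
    · exact h ▸ forall_mem_mk_mem hxN hyN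
    · simp [Function.update_of_ne h] at he

/-- Recolor `xz` from `k₁` to `k₂` and give `xy` the color `k₁`. -/
lemma exists_isLocalExtension_shift (hσ : IsProperPEC G D σ) (hxy : G.Adj x y)
    (hxz : G.Adj x z) {k₁ k₂ : Fin D} (hxz₁ : σ s(x, z) = some k₁)
    (hk : k₁ ≠ k₂) (hx : freeAt σ x k₂) (hz : freeAt σ z k₂) (hy : freeAt σ y k₁)
    (hxN : x ∈ N) (hyN : y ∈ N) (hzN : z ∈ N) : ∃ τ, IsLocalExtension G N s(x, y) σ τ := by
  classical
  set σ₁ := Function.update σ s(x, z) (some k₂)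
  have hσ₁ : IsProperPEC G D σ₁ := hσ.update_some hxz (fun e he _ => hx e he)
    (fun e he _ => hz e he)
  have hfree₁ : ∀ u, (∀ e, u ∈ e → e ≠ s(x, z) → σ e ≠ some k₁) →
      ∀ e, u ∈ e → e ≠ s(x, y) → σ₁ e ≠ some k₁ := by
    intro u hu e he _
    simp only [σ₁, Function.update_apply]
    split_ifs with h
    · simpa using hk.symm
    · exact hu e he h
  have hyz : s(x, y) ≠ s(x, z) := fun h => hy _ (h ▸ Sym2.mem_mk_right x y) hxz₁
  refine ⟨Function.update σ₁ s(x, y) (some k₁),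
    ⟨hσ₁.update_some hxy (hfree₁ x fun e he hne => hσ.ne_some_of_ne hxz₁
      (Sym2.mem_mk_left _ _) he hne) (hfree₁ y fun e he _ => hy e he), fun e => ?_⟩,
    fun e he => ?_⟩
  · by_cases h : e = s(x, y)
    · simp [h]
    by_cases h' : e = s(x, z)
    · simp [σ₁, h', hyz.symm, hxz₁]
    · simp [σ₁, h, h']
  · by_cases h : e = s(x, y)
    · exact h ▸ forall_mem_mk_mem hxN hyN
    by_cases h' : e = s(x, z)
    · exact h' ▸ forall_mem_mk_mem hxN hzN
    · simp [σ₁, Function.update_of_ne h, Function.update_of_ne h'] at he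

lemma IsProperPEC.update_exchange [DecidableEq V] (hσ : IsProperPEC G D σ) (hxv : G.Adj x v)
    (hzv : G.Adj z v) {k₁ k₂ : Fin D} (h₁ : σ s(x, v) = some k₁) (h₂ : σ s(z, v) = some k₂)
    (hk : k₁ ≠ k₂) (hx : freeAt σ x k₂) (hz : freeAt σ z k₁) :
    IsProperPEC G D (Function.update (Function.update σ s(x, v) (some k₂)) s(z, v) (some k₁)) := by
  have hne : s(x, v) ≠ s(z, v) := fun h => hk (Option.some_injective _ (h₁.symm.trans (h ▸ h₂)))
  -- Uncolor `xv` first, so that each of the three single-edge steps is legal.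
  have hσ₁ :
      IsProperPEC G D (Function.update (Function.update σ s(x, v) none) s(z, v) (some k₁)) := by
    refine (hσ.update_none _).update_some hzv (fun e he _ => ?_) (fun e he _ => ?_)
    all_goals
      rw [Function.update_apply]
      split_ifs with h
      · simp
    · exact hz e he
    · exact hσ.ne_some_of_ne h₁ (Sym2.mem_mk_right _ _) he h
  have hσ₂ := hσ₁.update_some hxv (k := k₂) (fun e he hne' => ?_) (fun e he hne' => ?_)
  · rwa [Function.update_comm hne, Function.update_idem, ← Function.update_comm hne] at hσ₂
  all_goals
    simp only [Function.update_apply, if_neg hne']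
    split_ifs with h
    · simpa using hk
  · exact hx e he
  · exact hσ.ne_some_of_ne h₂ (Sym2.mem_mk_right _ _) he h

/-- Exchange the colors `k₁` of `xv` and `k₂` of `zv`, and give `xy` the color `k₁`. -/
lemma exists_isLocalExtension_rotate (hσ : IsProperPEC G D σ) (hxy : G.Adj x y)
    (hxv : G.Adj x v) (hzv : G.Adj z v) (hxz : x ≠ z) (hyz : y ≠ z) (hyv : y ≠ v)
    {k₁ k₂ : Fin D} (h₁ : σ s(x, v) = some k₁) (h₂ : σ s(z, v) = some k₂) (hk : k₁ ≠ k₂)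
    (hx : freeAt σ x k₂) (hz : freeAt σ z k₁) (hy : freeAt σ y k₁) (hxN : x ∈ N) (hyN : y ∈ N)
    (hzN : z ∈ N) (hvN : v ∈ N) : ∃ τ, IsLocalExtension G N s(x, y) σ τ := by
  classical
  set σ' := Function.update (Function.update σ s(x, v) (some k₂)) s(z, v) (some k₁)
  have hfree : ∀ u, u ∉ s(z, v) → (∀ e, u ∈ e → e ≠ s(x, v) → σ e ≠ some k₁) →
      ∀ e, u ∈ e → e ≠ s(x, y) → σ' e ≠ some k₁ := by
    intro u hu hσu e he _
    simp only [σ', Function.update_apply]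
    split_ifs with h h'
    · exact absurd (h ▸ he) hu
    · simpa using hk.symm
    · exact hσu e he h'
  have hxzv : x ∉ s(z, v) := by simp [hxz, hxv.ne]
  have hyzv : y ∉ s(z, v) := by simp [hyz, hyv]
  refine ⟨Function.update σ' s(x, y) (some k₁), ⟨(hσ.update_exchange hxv hzv h₁ h₂ hk hx
    hz).update_some hxy (hfree x hxzv fun e he hne => hσ.ne_some_of_ne h₁
    (Sym2.mem_mk_left _ _) he hne) (hfree y hyzv fun e he _ => hy e he), fun e => ?_⟩,
    fun e he => ?_⟩
  · simp only [σ', Function.update_apply]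
    split_ifs with h h' h'' <;> simp_all
  · simp only [σ', Function.update_apply] at he
    split_ifs at he with h h' h''
    · exact h ▸ forall_mem_mk_mem hxN hyN
    · exact h' ▸ forall_mem_mk_mem hzN hvN
    · exact h'' ▸ forall_mem_mk_mem hxN hvN
    · exact absurd rfl he

end LocalMoves

section Sites

open Function

variable {V : Type} {D : ℕ} {G : SimpleGraph V} {ι : Type*} {x y : ι → V}

lemma pairwise_disjoint_edgeBall
    (hfar : Pairwise fun i j => ¬ edgeDistLE G 4 s(x i, y i) s(x j, y j)) :
    Pairwise (Disjoint on fun i => edgeBall G 2 s(x i, y i)) :=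
  fun _ _ hij => disjoint_edgeBall (hfar hij)

lemma eq_of_mem_edgeBall (hfar : Pairwise fun i j => ¬ edgeDistLE G 4 s(x i, y i) s(x j, y j))
    {w w' : V} {i j : ι} (hi : w ∈ edgeBall G 2 s(x i, y i))
    (hj : w' ∈ edgeBall G 2 s(x j, y j)) (h : w = w') : i = j :=
  by_contra fun hij => Set.disjoint_left.mp (pairwise_disjoint_edgeBall hfar hij) hi (h ▸ hj)

lemma exists_isProperExtension_of_kempeSwap {σ : Sym2 V → Option (Fin D)} {a b : Fin D}
    {R : Set V} (hσ : IsProperPEC G D σ) (hR : IsChainClosed σ a b R)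
    (hfar : Pairwise fun i j => ¬ edgeDistLE G 4 s(x i, y i) s(x j, y j))
    (h : ∀ i, ∃ τ, IsLocalExtension G (edgeBall G 2 s(x i, y i)) s(x i, y i)
      (kempeSwap a b R σ) τ) :
    ∃ τ, IsProperExtension G σ τ (Set.range fun i => s(x i, y i)) := by
  obtain ⟨τ, hτ⟩ := exists_isProperExtension_of_isLocalExtension (hσ.kempeSwap hR)
    (pairwise_disjoint_edgeBall hfar) _ h
  exact ⟨τ, hτ.of_eq_none_iff fun _ => kempeSwap_eq_none_iff⟩

/-- Swap the `(a,b)`-paths from `y i` to `z i`: this frees `b` at `y i`, and the endpoints `x i`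
lie on none of these paths. -/
lemma exists_isProperExtension_of_chainReach {σ : Sym2 V → Option (Fin D)} {a b : Fin D}
    {z : ι → V} (hσ : IsProperPEC G D σ) (hadj : ∀ i, G.Adj (x i) (y i))
    (hxb : ∀ i, freeAt σ (x i) b) (hya : ∀ i, freeAt σ (y i) a) (hzb : ∀ i, freeAt σ (z i) b)
    (hzx : ∀ i, z i ≠ x i) (hzy : ∀ i, z i ≠ y i) (hzN : ∀ i, z i ∈ edgeBall G 2 s(x i, y i))
    (hreach : ∀ i, chainReach σ a b (y i) (z i))
    (hfar : Pairwise fun i j => ¬ edgeDistLE G 4 s(x i, y i) s(x j, y j)) :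
    ∃ τ, IsProperExtension G σ τ (Set.range fun i => s(x i, y i)) := by
  set R := chainHull σ a b (Set.range y)
  have hR : IsChainClosed σ a b R := isChainClosed_chainHull _
  have hxR : ∀ i, x i ∉ R := by
    rintro i ⟨_, ⟨j, rfl⟩, hji⟩
    have hpath : chainPathEndpoints σ a b (y j) (z j) :=
      ⟨(hzy j).symm, hreach j, chainEndpoint_of_freeAt_left hσ (hya j),
        chainEndpoint_of_freeAt_right hσ (hzb j)⟩
    rcases hσ.eq_or_eq_of_chainEndpoint hpath (chainEndpoint_of_freeAt_right hσ (hxb i)) hji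
      with h | h
    · obtain rfl := eq_of_mem_edgeBall hfar left_mem_edgeBall right_mem_edgeBall h
      exact (hadj i).ne h
    · obtain rfl := eq_of_mem_edgeBall hfar left_mem_edgeBall (hzN j) h
      exact hzx i h.symm
  exact exists_isProperExtension_of_kempeSwap hσ hR hfar fun i =>
    exists_isLocalExtension_color (hσ.kempeSwap hR) (hadj i)
      (freeAt_kempeSwap_of_not_mem hR (hxR i) (hxb i))
      (freeAt_kempeSwap_of_mem (subset_chainHull _ ⟨i, rfl⟩) (hya i))
      left_mem_edgeBall right_mem_edgeBall

end Sites

section Types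

variable {V : Type} {G : SimpleGraph V} {π : Sym2 V → Option (Fin 8)} {ι : Type*} {x y : ι → V}
  {a b : Fin 8}

lemma HasType0.exists_isLocalExtension (hπ : IsProperPEC G 8 π) {x y : V}
    (h : HasType0 G π x y) : ∃ τ, IsLocalExtension G (edgeBall G 2 s(x, y)) s(x, y) π τ := by
  obtain ⟨τ, hτ, hsupp, hfix⟩ := h
  refine ⟨τ, ⟨hτ, hsupp⟩, fun e he => ?_⟩
  obtain ⟨u, hu, hdist⟩ := not_not.mp (mt (hfix e) he)
  have hedge : e ∈ G.edgeSet := by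
    by_cases hτe : τ e = none
    · exact hπ.1 e fun hπe => he (hτe.trans hπe.symm)
    · exact hτ.1 e hτe
  exact fun v hv => mem_edgeBall_succ_of_mem_edgeSet hedge hv hu hdist

theorem exists_isProperExtension_of_hasType0 (hπ : IsProperPEC G 8 π)
    (hT : ∀ i, HasType0 G π (x i) (y i))
    (hfar : Pairwise fun i j => ¬ edgeDistLE G 4 s(x i, y i) s(x j, y j)) :
    ∃ σ, IsProperExtension G π σ (Set.range fun i => s(x i, y i)) :=
  exists_isProperExtension_of_isLocalExtension hπ (pairwise_disjoint_edgeBall hfar) _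
    fun i => (hT i).exists_isLocalExtension hπ

/-- Swap the `(a,b)`-chains through the vertices `y i`, then color each `x i y i` with `a`. -/
theorem exists_isProperExtension_of_hasType1 (hπ : IsProperPEC G 8 π)
    (hadj : ∀ i, G.Adj (x i) (y i)) (hT : ∀ i, HasType1 π (x i) (y i) a b)
    (hfar : Pairwise fun i j => ¬ edgeDistLE G 4 s(x i, y i) s(x j, y j))
    (hind : Pairwise fun i j => ChainIndep G π a b s(x i, y i) s(x j, y j)) :
    ∃ σ, IsProperExtension G π σ (Set.range fun i => s(x i, y i)) := by
  set R := chainHull π a b (Set.range y)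
  have hR : IsChainClosed π a b R := isChainClosed_chainHull _
  have hxend : ∀ i, chainEndpoint π a b (x i) := fun i => chainEndpoint_of_freeAt_left hπ (hT i).1
  have hxR : ∀ i, x i ∉ R := by
    rintro i ⟨_, ⟨j, rfl⟩, hji⟩
    by_cases hij : i = j
    · exact (hT i).2.2 ⟨hij ▸ hji.symm, hxend i⟩
    have hne : x i ≠ y j := fun h => hij <| eq_of_mem_edgeBall hfar
      left_mem_edgeBall right_mem_edgeBall h
    exact hind hij ⟨x i, y j, left_mem_edgeBall, right_mem_edgeBall,
      hne, hji.symm, hxend i, chainEndpoint_of_freeAt_right hπ (hT j).2.1⟩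
  exact exists_isProperExtension_of_kempeSwap hπ hR hfar fun i =>
    exists_isLocalExtension_color (hπ.kempeSwap hR) (hadj i)
      (freeAt_kempeSwap_of_not_mem hR (hxR i) (hT i).1)
      (freeAt_kempeSwap_of_mem' (subset_chainHull _ ⟨i, rfl⟩) (hT i).2.1)
      left_mem_edgeBall right_mem_edgeBall

/-- Swap the `(a,b)`-paths starting at the vertices `x i`; afterwards `b` is free at `x i` and at
`z i`, so `x i z i` can take `b` and hand its old color to `x i y i`. -/
theorem exists_isProperExtension_of_hasType3 (hπ : IsProperPEC G 8 π)
    (hadj : ∀ i, G.Adj (x i) (y i)) (hnone : ∀ i, π s(x i, y i) = none)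
    (hT : ∀ i, HasType3 G π (x i) (y i) a b)
    (hfar : Pairwise fun i j => ¬ edgeDistLE G 4 s(x i, y i) s(x j, y j)) :
    ∃ σ, IsProperExtension G π σ (Set.range fun i => s(x i, y i)) := by
  choose hxa hyb hpath γ hγb hγy z hxz hzb hxzγ using hT
  set R := chainHull π a b (Set.range x)
  have hR : IsChainClosed π a b R := isChainClosed_chainHull _
  have hγa : ∀ i, γ i ≠ a := fun i h => hxa i _ (Sym2.mem_mk_left _ _) (h ▸ hxzγ i)
  have hzN : ∀ i, z i ∈ edgeBall G 2 s(x i, y i) :=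
    fun i => mem_edgeBall_succ_of_adj (hxz i).symm left_mem_edgeBall
  have hzR : ∀ i, z i ∉ R := by
    rintro i ⟨_, ⟨j, rfl⟩, hji⟩
    rcases hπ.eq_or_eq_of_chainEndpoint (hpath j) (chainEndpoint_of_freeAt_right hπ (hzb i)) hji
      with h | h
    · obtain rfl := eq_of_mem_edgeBall hfar (hzN i) left_mem_edgeBall h
      exact (hxz i).ne h.symm
    · obtain rfl := eq_of_mem_edgeBall hfar (hzN i) right_mem_edgeBall h
      have := hxzγ i
      rw [h, hnone] at this
      cases this
  exact exists_isProperExtension_of_kempeSwap hπ hR hfar fun i =>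
    exists_isLocalExtension_shift (hπ.kempeSwap hR) (hadj i) (hxz i)
      ((kempeSwap_eq_some_iff_of_ne (hγa i) (hγb i)).mpr (hxzγ i)) (hγb i)
      (freeAt_kempeSwap_of_mem (subset_chainHull _ ⟨i, rfl⟩) (hxa i))
      (freeAt_kempeSwap_of_not_mem hR (hzR i) (hzb i))
      (freeAt_kempeSwap_of_ne (hγa i) (hγb i) (hγy i)) left_mem_edgeBall right_mem_edgeBall
      (hzN i)

/-- Swap the `(a,b)`-cycles through the vertices `x i`; afterwards `x i v i` has color `b`, and
exchanging the colors of `x i v i` and `z i v i` frees `b` at `x i`. -/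
theorem exists_isProperExtension_of_hasType4 (hπ : IsProperPEC G 8 π)
    (hadj : ∀ i, G.Adj (x i) (y i)) (hT : ∀ i, HasType4 G π (x i) (y i) a b)
    (hfar : Pairwise fun i j => ¬ edgeDistLE G 4 s(x i, y i) s(x j, y j)) :
    ∃ σ, IsProperExtension G π σ (Set.range fun i => s(x i, y i)) := by
  choose hya hyb hcyc γ hγx z v hzv hzx hzy hvx hvy hxv hzv' hxva hzvγ hzb using hT
  set R := chainHull π a b (Set.range x)
  have hR : IsChainClosed π a b R := isChainClosed_chainHull _
  have hcyc' : ∀ s ∈ Set.range x, inChainCycle π a b s := by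
    rintro _ ⟨i, rfl⟩
    exact hcyc i
  have hvR : ∀ i, v i ∈ R := fun i => ⟨x i, ⟨i, rfl⟩,
    (chainGraph_adj_iff.mpr ⟨Or.inl (hxva i), (hxv i).ne⟩).reachable⟩
  have hγa : ∀ i, γ i ≠ a := fun i h => hγx i _ (Sym2.mem_mk_left _ _) (h ▸ hxva i)
  have hγb : ∀ i, γ i ≠ b := fun i h =>
    hcyc i (x i) (.refl _) (chainEndpoint_of_freeAt_right hπ (h ▸ hγx i))
  have hvN : ∀ i, v i ∈ edgeBall G 2 s(x i, y i) :=
    fun i => mem_edgeBall_succ_of_adj (hxv i).symm left_mem_edgeBall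
  have hzN : ∀ i, z i ∈ edgeBall G 2 s(x i, y i) :=
    fun i => mem_edgeBall_succ_of_adj (hzv' i) (mem_edgeBall_succ_of_adj (hxv i).symm
      left_mem_edgeBall)
  exact exists_isProperExtension_of_kempeSwap hπ hR hfar fun i =>
    exists_isLocalExtension_rotate (hπ.kempeSwap hR) (hadj i) (hxv i) (hzv' i) (hzx i).symm
      (hzy i).symm (hvy i).symm
      (kempeSwap_eq_some_left (Sym2.mem_mk_left _ _) (subset_chainHull _ ⟨i, rfl⟩) (hxva i))
      ((kempeSwap_eq_some_iff_of_ne (hγa i) (hγb i)).mpr (hzvγ i)) (hγb i).symm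
      (freeAt_kempeSwap_of_ne (hγa i) (hγb i) (hγx i))
      (freeAt_kempeSwap_of_not_mem hR (not_mem_chainHull_of_inChainCycle hcyc'
        (chainEndpoint_of_freeAt_right hπ (hzb i))) (hzb i))
      (freeAt_kempeSwap_of_not_mem hR (not_mem_chainHull_of_inChainCycle hcyc'
        (chainEndpoint_of_freeAt_right hπ (hyb i))) (hyb i))
      left_mem_edgeBall right_mem_edgeBall (hzN i) (hvN i)

/-- Swap the `(a,b)`-chains through the vertices `v i`, which avoid the paths from `x i` to
`y i`; afterwards `z i v i` has color `b`, and exchanging the colors of `x i v i` and `z i v i`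
frees the old color of `x i v i` at `x i`. -/
theorem exists_isProperExtension_of_hasType5 (hπ : IsProperPEC G 8 π)
    (hadj : ∀ i, G.Adj (x i) (y i)) (hT : ∀ i, HasType5 G π (x i) (y i) a b)
    (hfar : Pairwise fun i j => ¬ edgeDistLE G 4 s(x i, y i) s(x j, y j)) :
    ∃ σ, IsProperExtension G π σ (Set.range fun i => s(x i, y i)) := by
  choose hya hxb hpath γ hγa hγy z v hzv hzx hzy hvx hvy hxv hzv' hxvγ hzva hzb hzγ using hT
  set R := chainHull π a b (Set.range v)
  have hR : IsChainClosed π a b R := isChainClosed_chainHull _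
  have hγb : ∀ i, γ i ≠ b := fun i h => hxb i _ (Sym2.mem_mk_left _ _) (h ▸ hxvγ i)
  have hvN : ∀ i, v i ∈ edgeBall G 2 s(x i, y i) :=
    fun i => mem_edgeBall_succ_of_adj (hxv i).symm left_mem_edgeBall
  have hzN : ∀ i, z i ∈ edgeBall G 2 s(x i, y i) :=
    fun i => mem_edgeBall_succ_of_adj (hzv' i) (mem_edgeBall_succ_of_adj (hxv i).symm
      left_mem_edgeBall)
  have hvz : ∀ j, chainReach π a b (v j) (z j) := fun j =>
    (chainGraph_adj_iff.mpr ⟨Or.inl (Sym2.eq_swap ▸ hzva j), (hzv j).symm⟩).reachable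
  have hxz : ∀ i j, ¬ chainReach π a b (x i) (z j) := by
    intro i j hij
    rcases hπ.eq_or_eq_of_chainEndpoint (hpath i) (chainEndpoint_of_freeAt_right hπ (hzb j)) hij
      with h | h
    · obtain rfl := eq_of_mem_edgeBall hfar (hzN j) left_mem_edgeBall h
      exact hzx j h
    · obtain rfl := eq_of_mem_edgeBall hfar (hzN j) right_mem_edgeBall h
      exact hzy j h
  have hxR : ∀ i, x i ∉ R := by
    rintro i ⟨_, ⟨j, rfl⟩, hji⟩
    exact hxz i j (hji.symm.trans (hvz j))
  exact exists_isProperExtension_of_kempeSwap hπ hR hfar fun i =>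
    exists_isLocalExtension_rotate (hπ.kempeSwap hR) (hadj i) (hxv i) (hzv' i) (hzx i).symm
      (hzy i).symm (hvy i).symm ((kempeSwap_eq_some_iff_of_ne (hγa i) (hγb i)).mpr (hxvγ i))
      (kempeSwap_eq_some_left (Sym2.mem_mk_right _ _) (subset_chainHull _ ⟨i, rfl⟩) (hzva i))
      (hγb i) (freeAt_kempeSwap_of_not_mem hR (hxR i) (hxb i))
      (freeAt_kempeSwap_of_ne (hγa i) (hγb i) (hzγ i))
      (freeAt_kempeSwap_of_ne (hγa i) (hγb i) (hγy i))
      left_mem_edgeBall right_mem_edgeBall (hzN i) (hvN i)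

end Types

section Squares

variable {V : Type} {D : ℕ} {G : SimpleGraph V} {σ : Sym2 V → Option (Fin D)} {a c : Fin D}
  {x v₁ z v₂ : V}

lemma IsProperPEC.isChainClosed_square (hσ : IsProperPEC G D σ) (h₁ : σ s(x, v₁) = some c)
    (h₂ : σ s(x, v₂) = some a) (h₃ : σ s(z, v₁) = some a) (h₄ : σ s(z, v₂) = some c) :
    IsChainClosed σ a c {x, v₁, z, v₂} := by
  rintro u (rfl | rfl | rfl | rfl) w huw
  · rcases hσ.eq_or_eq_of_chainGraph_adj h₂ h₁ huw with rfl | rfl <;> simp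
  · rw [Sym2.eq_swap] at h₁ h₃
    rcases hσ.eq_or_eq_of_chainGraph_adj h₃ h₁ huw with rfl | rfl <;> simp
  · rcases hσ.eq_or_eq_of_chainGraph_adj h₃ h₄ huw with rfl | rfl <;> simp
  · rw [Sym2.eq_swap] at h₂ h₄
    rcases hσ.eq_or_eq_of_chainGraph_adj h₂ h₄ huw with rfl | rfl <;> simp

lemma IsProperPEC.mem_or_mem_of_square (hσ : IsProperPEC G D σ) (h₂ : σ s(x, v₂) = some a)
    (h₃ : σ s(z, v₁) = some a) {e : Sym2 V} {u : V} (he : σ e = some a) (hu : u ∈ e)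
    (huQ : u ∈ ({x, v₁, z, v₂} : Set V)) : x ∈ e ∨ z ∈ e := by
  rcases huQ with rfl | rfl | rfl | rfl
  · exact Or.inl hu
  · rw [hσ.eq_of_eq_some he h₃ hu (Sym2.mem_mk_right _ _)]
    exact Or.inr (Sym2.mem_mk_left _ _)
  · exact Or.inr hu
  · rw [hσ.eq_of_eq_some he h₂ hu (Sym2.mem_mk_right _ _)]
    exact Or.inl (Sym2.mem_mk_left _ _)

end Squares

section Type6

variable {V : Type} {G : SimpleGraph V} {π : Sym2 V → Option (Fin 8)} {ι : Type*} {x y : ι → V}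
  {a b c d : Fin 8}

/-- Exchanging `a` and `c` around the squares `x i v₁ i z i v₂ i` leaves the `(a,b)`-path from
`y i` to `x i` intact up to `v₂ i`, whose `a`-edge now leads to `z i`. -/
lemma chainReach_kempeSwap_squares (hπ : IsProperPEC G 8 π) (hab : a ≠ b) (hbc : b ≠ c)
    {z v₁ v₂ : ι → V} (hadj : ∀ i, G.Adj (x i) (y i))
    (hfar : Pairwise fun i j => ¬ edgeDistLE G 4 s(x i, y i) s(x j, y j))
    (hpath : ∀ i, chainPathEndpoints π a b (x i) (y i)) (hxb : ∀ i, freeAt π (x i) b)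
    (hzb : ∀ i, freeAt π (z i) b) (hzy : ∀ i, z i ≠ y i)
    (hzN : ∀ i, z i ∈ edgeBall G 2 s(x i, y i)) (hxv₂ : ∀ i, x i ≠ v₂ i)
    (hzv₂ : ∀ i, z i ≠ v₂ i) (hxv₂a : ∀ i, π s(x i, v₂ i) = some a)
    (hzv₁a : ∀ i, π s(z i, v₁ i) = some a) (hzv₂c : ∀ i, π s(z i, v₂ i) = some c) (i : ι) :
    chainReach (kempeSwap a c (⋃ j, {x j, v₁ j, z j, v₂ j}) π) a b (y i) (z i) := by
  classical
  have hxv₂' : (chainGraph π a b).Adj (x i) (v₂ i) :=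
    chainGraph_adj_iff.mpr ⟨Or.inl (hxv₂a i), hxv₂ i⟩
  obtain ⟨W, hxW⟩ := SimpleGraph.exists_walk_not_mem_support (hpath i).2.2.1 hxv₂' (hpath i).2.1
    (hpath i).1
  have hW : ∀ u ∈ W.support, chainEndpoint π a b u → u = y i := fun u hu hend =>
    (hπ.eq_or_eq_of_chainEndpoint (hpath i) hend
      (hxv₂'.reachable.trans ⟨W.takeUntil u hu⟩)).resolve_left fun h => hxW (h ▸ hu)
  -- An `a`-edge of `W` meeting a square would put its `b`-free corner `x j` or `z j` on `W`.
  have hfix : ∀ e ∈ W.edges, kempeSwap a c (⋃ j, {x j, v₁ j, z j, v₂ j}) π e = π e := by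
    intro e he
    rcases (mem_edgeSet_chainGraph.mp (W.edges_subset_edgeSet he)).1 with hea | heb
    · refine kempeSwap_of_forall_not_mem ?_
      rintro ⟨u, hu, huR⟩
      obtain ⟨j, hj⟩ := Set.mem_iUnion.mp huR
      rcases hπ.mem_or_mem_of_square (hxv₂a j) (hzv₁a j) hea hu hj with h | h
      · have hxy := hW _ (W.mem_support_of_mem_edges he h)
          (chainEndpoint_of_freeAt_right hπ (hxb j))
        obtain rfl := eq_of_mem_edgeBall hfar left_mem_edgeBall right_mem_edgeBall hxy
        exact (hadj j).ne hxy
      · have hzy' := hW _ (W.mem_support_of_mem_edges he h)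
          (chainEndpoint_of_freeAt_right hπ (hzb j))
        obtain rfl := eq_of_mem_edgeBall hfar (hzN j) right_mem_edgeBall hzy'
        exact hzy j hzy'
    · exact (kempeSwap_eq_some_iff_of_ne hab.symm hbc).mpr heb |>.trans heb.symm
  have hv₂z :
      (chainGraph (kempeSwap a c (⋃ j, {x j, v₁ j, z j, v₂ j}) π) a b).Adj (v₂ i) (z i) := by
    refine chainGraph_adj_iff.mpr ⟨Or.inl ?_, (hzv₂ i).symm⟩
    rw [Sym2.eq_swap]
    exact kempeSwap_eq_some_right (Sym2.mem_mk_left _ _) (Set.mem_iUnion.mpr ⟨i, by simp⟩)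
      (hzv₂c i)
  exact (chainReach_of_walk W hfix).symm.trans hv₂z.reachable

theorem exists_isProperExtension_of_hasType6 (hπ : IsProperPEC G 8 π) (hab : a ≠ b)
    (hbc : b ≠ c) (hadj : ∀ i, G.Adj (x i) (y i))
    (hT : ∀ i, HasType6 G π (x i) (y i) a b c d)
    (hfar : Pairwise fun i j => ¬ edgeDistLE G 4 s(x i, y i) s(x j, y j)) :
    ∃ σ, IsProperExtension G π σ (Set.range fun i => s(x i, y i)) := by
  choose hya _ _ hxb hpath _ z v₁ v₂ _ hzv₂ _ hzx hzy _ hv₁y _ hv₂y hxv₁ hxv₂ hzv₁ _ hxv₁c hxv₂a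
    hzv₁a hzv₂c hzb _ using hT
  set R₀ : Set V := ⋃ i, {x i, v₁ i, z i, v₂ i}
  have hR₀ : IsChainClosed π a c R₀ := IsChainClosed.iUnion fun i =>
    hπ.isChainClosed_square (hxv₁c i) (hxv₂a i) (hzv₁a i) (hzv₂c i)
  have hv₁N : ∀ i, v₁ i ∈ edgeBall G 2 s(x i, y i) :=
    fun i => mem_edgeBall_succ_of_adj (hxv₁ i).symm left_mem_edgeBall
  have hzN : ∀ i, z i ∈ edgeBall G 2 s(x i, y i) := fun i => mem_edgeBall_succ_of_adj (hzv₁ i)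
    (mem_edgeBall_succ_of_adj (hxv₁ i).symm left_mem_edgeBall)
  have hyR₀ : ∀ i, y i ∉ R₀ := by
    intro i hy
    obtain ⟨j, hj⟩ := Set.mem_iUnion.mp hy
    rcases hj with h | h | h | h
    · obtain rfl := eq_of_mem_edgeBall hfar right_mem_edgeBall left_mem_edgeBall h
      exact (hadj i).ne h.symm
    · obtain rfl := eq_of_mem_edgeBall hfar right_mem_edgeBall (hv₁N j) h
      exact hv₁y i h.symm
    · obtain rfl := eq_of_mem_edgeBall hfar right_mem_edgeBall (hzN j) h
      exact hzy i h.symm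
    · obtain rfl := eq_of_mem_edgeBall hfar right_mem_edgeBall
        (mem_edgeBall_succ_of_adj (hxv₂ j).symm left_mem_edgeBall) h
      exact hv₂y i h.symm
  obtain ⟨τ, hτ⟩ := exists_isProperExtension_of_chainReach (hπ.kempeSwap hR₀) hadj
    (fun i => freeAt_kempeSwap_of_ne hab.symm hbc (hxb i))
    (fun i => freeAt_kempeSwap_of_not_mem hR₀ (hyR₀ i) (hya i))
    (fun i => freeAt_kempeSwap_of_ne hab.symm hbc (hzb i)) hzx hzy hzN
    (chainReach_kempeSwap_squares hπ hab hbc hadj hfar hpath hxb hzb hzy hzN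
      (fun i => (hxv₂ i).ne) hzv₂ hxv₂a hzv₁a hzv₂c) hfar
  exact ⟨τ, hτ.of_eq_none_iff fun _ => kempeSwap_eq_none_iff⟩

end Type6

theorem stmt13_general {V : Type} [Fintype V] [DecidableEq V] (G : SimpleGraph V) [DecidableRel G.Adj]
    (π : Sym2 V → Option (Fin 8)) (hπ : IsProperPEC G 8 π)
    (tag : TypeTag) (a b c d : Fin 8)
    (habcd : a ≠ b ∧ a ≠ c ∧ a ≠ d ∧ b ≠ c ∧ b ≠ d ∧ c ≠ d)
    (S : Set (V × V))
    (hS : ∀ p ∈ S, G.Adj p.1 p.2 ∧ π s(p.1, p.2) = none ∧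
      IsButterflyLikeAt G p.1 p.2 ∧ HasTypeTag G π tag a b c d p.1 p.2)
    (hind : ∀ p ∈ S, ∀ q ∈ S, p ≠ q →
      ¬ edgeDistLE G 4 s(p.1, p.2) s(q.1, q.2) ∧
        TagChainIndep G π tag a b c d s(p.1, p.2) s(q.1, q.2)) :
    ∃ σ : Sym2 V → Option (Fin 8), IsProperPEC G 8 σ ∧
      ∀ e, (σ e ≠ none ↔ (π e ≠ none ∨ ∃ p ∈ S, e = s(p.1, p.2))) := by
  have hadj : ∀ p : S, G.Adj p.1.1 p.1.2 := fun p => (hS p.1 p.2).1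
  have hnone : ∀ p : S, π s(p.1.1, p.1.2) = none := fun p => (hS p.1 p.2).2.1
  have hT : ∀ p : S, HasTypeTag G π tag a b c d p.1.1 p.1.2 := fun p => (hS p.1 p.2).2.2.2
  have hfar : Pairwise fun p q : S => ¬ edgeDistLE G 4 s(p.1.1, p.1.2) s(q.1.1, q.1.2) :=
    fun p q hpq => (hind p.1 p.2 q.1 q.2 (Subtype.coe_injective.ne hpq)).1
  have hindep : Pairwise fun p q : S =>
      TagChainIndep G π tag a b c d s(p.1.1, p.1.2) s(q.1.1, q.1.2) :=
    fun p q hpq => (hind p.1 p.2 q.1 q.2 (Subtype.coe_injective.ne hpq)).2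
  suffices h : ∃ σ, IsProperExtension G π σ (Set.range fun p : S => s(p.1.1, p.1.2)) by
    obtain ⟨σ, hσ, hsupp⟩ := h
    exact ⟨σ, hσ, fun e => (hsupp e).trans (by simp [eq_comm])⟩
  cases tag
  · exact exists_isProperExtension_of_hasType0 hπ hT hfar
  · exact exists_isProperExtension_of_hasType1 hπ hadj hT hfar hindep
  · exact exists_isProperExtension_of_hasType3 hπ hadj hnone hT hfar
  · exact exists_isProperExtension_of_hasType4 hπ hadj hT hfar
  · exact exists_isProperExtension_of_hasType5 hπ hadj hT hfar
  · exact exists_isProperExtension_of_hasType6 hπ habcd.1 habcd.2.2.2.1 hadj hT hfar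

/-- A pairwise 4-independent and `T`-chain independent family of uncolored butterfly-like
edges of the same type `T ∈ {0, 1_{ab}, 3_{ab}, 4_{ab}, 5_{ab}, 6_{abcd}}` can all be colored
at once. -/
theorem stmt13 {V : Type} [Fintype V] [DecidableEq V] (G : SimpleGraph V) [DecidableRel G.Adj]
    (hΔ : G.maxDegree ≤ 8) (π : Sym2 V → Option (Fin 8)) (hπ : IsProperPEC G 8 π)
    (tag : TypeTag) (a b c d : Fin 8)
    (habcd : a ≠ b ∧ a ≠ c ∧ a ≠ d ∧ b ≠ c ∧ b ≠ d ∧ c ≠ d)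
    (S : Set (V × V))
    (hS : ∀ p ∈ S, G.Adj p.1 p.2 ∧ π s(p.1, p.2) = none ∧
      IsButterflyLikeAt G p.1 p.2 ∧ HasTypeTag G π tag a b c d p.1 p.2)
    (hind : ∀ p ∈ S, ∀ q ∈ S, p ≠ q →
      ¬ edgeDistLE G 4 s(p.1, p.2) s(q.1, q.2) ∧
        TagChainIndep G π tag a b c d s(p.1, p.2) s(q.1, q.2)) :
    ∃ σ : Sym2 V → Option (Fin 8), IsProperPEC G 8 σ ∧
      ∀ e, (σ e ≠ none ↔ (π e ≠ none ∨ ∃ p ∈ S, e = s(p.1, p.2))) :=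
  stmt13_general G π hπ tag a b c d habcd S hS hind
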